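/- arXiv:1007.0862 — 2 statements merged into one kernel-verified Lean document; each statement's English description precedes it below -/
import Mathlib

section
/- Fix q̃ > 0 with q̃r > 1 and an integer g ≥ 1. Let A ⊆ V_n with |A| = m (for any realization of the graph), write ψ = ψ(A), and set d = |{σ ∈ T_m : ψ(σ) = 1}|. Then for every ψ-admissible family (B_0,…,B_i) with i < g, and every 0 ≤ j ≤ i, one has |J(B_j) ∩ {ψ = 0}| ≥ (q̃r)^{j+1} m − (q̃r)^j d. -/
open MeasureTheory
open scoped ENNReal
/-- A directed-graph structure on `V_n = Fin n`: each vertex `x` has an ordered `r`-tuple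
of distinct input vertices `y_1(x), …, y_r(x)`, all different from `x`. -/
def IsGraph {n r : ℕ} (y : Fin n → Fin r → Fin n) : Prop :=
  ∀ x, Function.Injective (y x) ∧ ∀ i, y x i ≠ x

/-- The threshold contact process on the graph `y`, driven by `B`, started from `ξ0`:
`ξ_{t+1}(x) = 1` iff `B x (t+1) = 1` and `ξ_t(y_i(x)) = 1` for some `i`. -/
def xi {n r : ℕ} (y : Fin n → Fin r → Fin n) (B : Fin n → ℕ → Bool)
    (ξ0 : Fin n → Bool) : ℕ → Fin n → Bool
  | 0 => ξ0
  | t + 1 => fun x => B x (t + 1) && decide (∃ i : Fin r, xi y B ξ0 t (y x i) = true)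

/-- The dual threshold contact process: `ξ̂_{t+1}(x) = 1` iff there are `z` and `i` with
`y_i(z) = x`, `ξ̂_t(z) = 1` and `B z t = 1`. -/
def xihat {n r : ℕ} (y : Fin n → Fin r → Fin n) (B : Fin n → ℕ → Bool)
    (ξ0 : Fin n → Bool) : ℕ → Fin n → Bool
  | 0 => ξ0
  | t + 1 => fun x =>
      decide (∃ z, ∃ i : Fin r, y z i = x ∧ xihat y B ξ0 t z = true ∧ B z t = true)

/-- The number of occupied sites of a configuration. -/
def numOnes {n : ℕ} (ξ : Fin n → Bool) : ℕ := (Finset.univ.filter fun x => ξ x = true).card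

/-- A vertex of the forest `T_m`: a root index in `Fin m` together with a path of length
`i ≤ g` with steps in `Fin r`. -/
abbrev Tvert (m g r : ℕ) := Fin m × Σ i : Fin (g + 1), (Fin (i : ℕ) → Fin r)

namespace Tvert

/-- The generation (path length) of a vertex of `T_m`. -/
def len {m g r : ℕ} (σ : Tvert m g r) : ℕ := σ.2.1

/-- Truncation of `σ` to path length `l` (for `l ≤ len σ`): the prefix `(σ_0, …, σ_l)`. -/
def trunc {m g r : ℕ} (σ : Tvert m g r) (l : ℕ) : Tvert m g r :=
  ⟨σ.1, ⟨⟨min l (len σ), lt_of_le_of_lt (min_le_right _ _) σ.2.1.2⟩,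
    fun k => σ.2.2 ⟨k, lt_of_lt_of_le k.2 (min_le_right _ _)⟩⟩⟩

/-- The tuple `(σ_0, σ_1, …, σ_i)` of a vertex, as a list of naturals. -/
def key {m g r : ℕ} (σ : Tvert m g r) : List ℕ :=
  (σ.1 : ℕ) :: (List.ofFn σ.2.2).map Fin.val

/-- The order `≺` on `T_m`: shorter vertices first; among vertices of the same length,
lexicographic order on the tuple `(σ_0, …, σ_i)`. -/
def prec {m g r : ℕ} (σ σ' : Tvert m g r) : Prop :=
  len σ < len σ' ∨ (len σ = len σ' ∧ List.Lex (· < ·) (key σ) (key σ'))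

/-- `σ → σ'` iff `σ' = (σ, j)` for some `j`, i.e. `σ'` extends `σ` by one step. -/
def edge {m g r : ℕ} (σ σ' : Tvert m g r) : Prop :=
  len σ' = len σ + 1 ∧ trunc σ' (len σ) = σ

open scoped Classical in
/-- `J(B)`: the set of vertices reachable by one directed edge from `B`. -/
noncomputable def J {m g r : ℕ} (B : Finset (Tvert m g r)) : Finset (Tvert m g r) :=
  Finset.univ.filter fun σ' => ∃ σ ∈ B, edge σ σ'

end Tvert

/-- `z^σ = y_{σ_i}(y_{σ_{i-1}}(⋯ y_{σ_1}(x_{σ_0})⋯))`, where `x_1 < … < x_m` enumerates `A`. -/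
noncomputable def zvert {n r m g : ℕ} (y : Fin n → Fin r → Fin n)
    (A : Finset (Fin n)) (hA : A.card = m) (σ : Tvert m g r) : Fin n :=
  (List.ofFn σ.2.2).foldl (fun v j => y v j) (A.orderIsoOfFin hA σ.1 : Fin n)

open scoped Classical in
/-- `A^σ = {z^{σ'} : σ' ≺ σ}`. -/
noncomputable def Aseen {n r m g : ℕ} (y : Fin n → Fin r → Fin n)
    (A : Finset (Fin n)) (hA : A.card = m) (σ : Tvert m g r) : Finset (Fin n) :=
  (Finset.univ.filter fun σ' => Tvert.prec σ' σ).image (zvert y A hA)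

open scoped Classical in
/-- The configuration `ψ(A) ∈ {0,1}^{T_m}`: roots get `0`; a non-root vertex `σ` gets `0`
if a strict prefix of `σ` already has value `1` or if `z^σ ∉ A^σ`, and gets `1` otherwise. -/
noncomputable def psi {n r m g : ℕ} (y : Fin n → Fin r → Fin n)
    (A : Finset (Fin n)) (hA : A.card = m) : Tvert m g r → Bool := fun σ =>
  if h0 : Tvert.len σ = 0 then false
  else
    decide (zvert y A hA σ ∈ Aseen y A hA σ) &&
      !(List.range (Tvert.len σ)).any fun l =>
        if hl : l < Tvert.len σ then psi y A hA (Tvert.trunc σ l) else false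
termination_by σ => Tvert.len σ
decreasing_by
  simp only [Tvert.trunc, Tvert.len]
  exact lt_of_le_of_lt (min_le_left _ _) hl

namespace Tvert

/-- `(B_0, …, B_i)` is a family: `B_0 ⊆ T⁰_m` and `B_{j+1} ⊆ J(B_j)` for `j < i`. -/
def IsFamily {m g r : ℕ} (i : ℕ) (Bs : ℕ → Finset (Tvert m g r)) : Prop :=
  i < g ∧ (∀ σ ∈ Bs 0, len σ = 0) ∧ ∀ j < i, Bs (j + 1) ⊆ J (Bs j)

open scoped Classical in
/-- The part of `J(B)` on which `ψ` vanishes. -/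
noncomputable def Jzero {m g r : ℕ} (ψ : Tvert m g r → Bool) (B : Finset (Tvert m g r)) :
    Finset (Tvert m g r) :=
  (J B).filter fun σ => ψ σ = false

/-- A family `(B_0, …, B_i)` is `ψ`-admissible. -/
def IsAdmissible {m g r : ℕ} (qt : ℝ) (ψ : Tvert m g r → Bool)
    (i : ℕ) (Bs : ℕ → Finset (Tvert m g r)) : Prop :=
  IsFamily (g := g) i Bs ∧
    (∀ j ≤ i, ∀ σ ∈ Bs j, ψ σ = false) ∧
    (qt * m ≤ (Bs 0).card) ∧
    ∀ j < i, qt * (Jzero ψ (Bs j)).card ≤ (Bs (j + 1)).card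

/-- A family `(B_0, …, B_i)` is `ψ`-good: it is `ψ`-admissible and in addition
`|J(B_j) ∩ {ψ = 0}| ≥ (q̃r − 1 − δ)(q̃r)^j m` for all `j ≤ i`. -/
def IsGood {m g r : ℕ} (qt δ : ℝ) (ψ : Tvert m g r → Bool)
    (i : ℕ) (Bs : ℕ → Finset (Tvert m g r)) : Prop :=
  IsAdmissible qt ψ i Bs ∧
    ∀ j ≤ i, (qt * r - 1 - δ) * (qt * r) ^ j * m ≤ (Jzero ψ (Bs j)).card

/-- `ψ` is robust: every `ψ`-admissible family is `ψ`-good. -/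
def Robust {m g r : ℕ} (qt δ : ℝ) (ψ : Tvert m g r → Bool) : Prop :=
  ∀ (i : ℕ) (Bs : ℕ → Finset (Tvert m g r)), IsAdmissible qt ψ i Bs → IsGood qt δ ψ i Bs

end Tvert

/-!
Every vertex of `B_j` has `r` children in `J(B_j)`, and those children on which `ψ` does not
vanish are ones of generation `j + 1`. Writing `L_k` for the number of ones of generation at most
`k`, this gives `r |B_j| + L_j ≤ |J(B_j) ∩ {ψ = 0}| + L_{j+1}`; combined with the admissibility
bounds `|B_0| ≥ q̃m` and `|B_{j+1}| ≥ q̃ |J(B_j) ∩ {ψ = 0}|`, an induction on `j` yields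
`|J(B_j) ∩ {ψ = 0}| ≥ (q̃r)^{j+1} m − (q̃r)^j L_{j+1}`, and `L_{j+1} ≤ d`.
-/

open Finset

theorem le_of_pow_growth_recurrence {q r m : ℝ} {a z L : ℕ → ℝ} {i : ℕ}
    (hqr : 1 ≤ q * r) (hr : 0 ≤ r) (hL0 : 0 ≤ L 0) (hL : Monotone L)
    (ha0 : q * m ≤ a 0) (ha : ∀ j < i, q * z j ≤ a (j + 1))
    (hz : ∀ j ≤ i, r * a j + L j ≤ z j + L (j + 1)) :
    ∀ j ≤ i, (q * r) ^ (j + 1) * m - (q * r) ^ j * L (j + 1) ≤ z j := by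
  have hqr0 : 0 ≤ q * r := zero_le_one.trans hqr
  intro j
  induction j with
  | zero =>
    intro h0
    linear_combination hz 0 h0 + mul_le_mul_of_nonneg_left ha0 hr + hL0
  | succ j ih =>
    intro hj
    have hpow : 1 ≤ (q * r) ^ (j + 1) := one_le_pow₀ hqr
    have hLj : L (j + 1) ≤ L (j + 2) := hL (by omega)
    calc (q * r) ^ (j + 2) * m - (q * r) ^ (j + 1) * L (j + 2)
        ≤ q * r * ((q * r) ^ (j + 1) * m - (q * r) ^ j * L (j + 1)) + L (j + 1) - L (j + 2) := by
          linear_combination mul_le_mul_of_nonneg_right hpow (sub_nonneg.mpr hLj)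
      _ ≤ r * (q * z j) + L (j + 1) - L (j + 2) := by
          linear_combination mul_le_mul_of_nonneg_left (ih (by omega)) hqr0
      _ ≤ r * a (j + 1) + L (j + 1) - L (j + 2) := by
          linear_combination mul_le_mul_of_nonneg_left (ha j (by omega)) hr
      _ ≤ z (j + 1) := by linear_combination hz (j + 1) hj

namespace Tvert

variable {m g r : ℕ}

theorem ext_of_entries {σ τ : Tvert m g r} (h1 : σ.1 = τ.1) (hlen : len σ = len τ)
    (h2 : ∀ l (hσ : l < len σ) (hτ : l < len τ), σ.2.2 ⟨l, hσ⟩ = τ.2.2 ⟨l, hτ⟩) : σ = τ := by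
  obtain ⟨a, i, f⟩ := σ
  obtain ⟨b, i', f'⟩ := τ
  obtain rfl : a = b := h1
  obtain rfl : i = i' := Fin.ext hlen
  obtain rfl : f = f' := funext fun l => h2 l l.2 l.2
  rfl

def child (σ : Tvert m g r) (hσ : len σ < g) (k : Fin r) : Tvert m g r :=
  ⟨σ.1, ⟨len σ + 1, by omega⟩, Fin.snoc σ.2.2 k⟩

theorem trunc_child (σ : Tvert m g r) (hσ : len σ < g) (k : Fin r) :
    trunc (child σ hσ k) (len σ) = σ := by
  refine ext_of_entries rfl (by simp [trunc, child, len]) fun l _ hl => ?_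
  simp only [child, trunc, Fin.snoc, Fin.castLT_mk, Fin.castSucc_mk, cast_eq, hl, ↓reduceDIte]
  rfl

theorem edge_child (σ : Tvert m g r) (hσ : len σ < g) (k : Fin r) :
    edge σ (child σ hσ k) :=
  ⟨rfl, trunc_child σ hσ k⟩

theorem child_injective (σ : Tvert m g r) (hσ : len σ < g) :
    Function.Injective (child σ hσ) := by
  intro k k' h
  have := congrFun (eq_of_heq (Sigma.mk.inj_iff.mp (Prod.ext_iff.mp h).2).2) (Fin.last _)
  simpa [Fin.snoc] using this

theorem card_mul_le_card_J {B : Finset (Tvert m g r)} {j : ℕ} (hj : j < g)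
    (hB : ∀ σ ∈ B, len σ = j) : #B * r ≤ #(J B) := by
  classical
  -- double counting along `edge`: each `σ ∈ B` has `r` children, each vertex one parent in `B`
  simpa using card_mul_le_card_mul edge (s := B) (t := J B) (n := 1)
    (fun σ hσ => by
      have hσg : len σ < g := hB σ hσ ▸ hj
      calc r = #(univ.image (child σ hσg)) := by
            rw [card_image_of_injective _ (child_injective σ hσg), card_univ, Fintype.card_fin]
        _ ≤ _ := card_le_card fun τ hτ => by
            obtain ⟨k, -, rfl⟩ := mem_image.mp hτ
            simp only [bipartiteAbove, J, mem_filter, mem_univ, true_and]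
            exact ⟨⟨σ, hσ, edge_child σ hσg k⟩, edge_child σ hσg k⟩)
    (fun τ _ => card_le_one.mpr fun σ hσ σ' hσ' => by
      simp only [bipartiteBelow, mem_filter] at hσ hσ'
      rw [← hσ.2.2, ← hσ'.2.2, hB σ hσ.1, hB σ' hσ'.1])

theorem len_of_mem_J {B : Finset (Tvert m g r)} {j : ℕ} (hB : ∀ σ ∈ B, len σ = j)
    {τ : Tvert m g r} (hτ : τ ∈ J B) : len τ = j + 1 := by
  classical
  obtain ⟨σ, hσ, hστ⟩ := (mem_filter.mp hτ).2
  rw [hστ.1, hB σ hσ]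

theorem IsFamily.len_eq {i : ℕ} {Bs : ℕ → Finset (Tvert m g r)} (h : IsFamily (g := g) i Bs) :
    ∀ j ≤ i, ∀ σ ∈ Bs j, len σ = j := by
  intro j
  induction j with
  | zero => exact fun _ => h.2.1
  | succ j ih =>
    exact fun hj σ hσ => len_of_mem_J (ih (by omega)) (h.2.2 j (by omega) hσ)

def onesUpTo (ψ : Tvert m g r → Bool) (k : ℕ) : Finset (Tvert m g r) :=
  univ.filter fun σ => ψ σ = true ∧ len σ ≤ k

theorem onesUpTo_mono (ψ : Tvert m g r → Bool) : Monotone (onesUpTo ψ) :=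
  fun _ _ hkl σ hσ => by
    simp only [onesUpTo, mem_filter, mem_univ, true_and] at hσ ⊢
    exact ⟨hσ.1, hσ.2.trans hkl⟩

theorem card_mul_add_card_onesUpTo_le (ψ : Tvert m g r → Bool) {B : Finset (Tvert m g r)}
    {j : ℕ} (hj : j < g) (hB : ∀ σ ∈ B, len σ = j) :
    #B * r + #(onesUpTo ψ j) ≤ #(Jzero ψ B) + #(onesUpTo ψ (j + 1)) := by
  set ones := (J B).filter fun σ => ψ σ = true
  have hsplit : #(Jzero ψ B) + #ones = #(J B) := by
    rw [Jzero, ← card_filter_add_card_filter_not (p := fun σ => ψ σ = false) (s := J B)]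
    simp [ones]
  have hdisj : Disjoint ones (onesUpTo ψ j) := disjoint_left.mpr fun σ hσ hσ' => by
    simp only [ones, onesUpTo, mem_filter] at hσ hσ'
    have := len_of_mem_J hB hσ.1
    omega
  have hsub : ones ∪ onesUpTo ψ j ⊆ onesUpTo ψ (j + 1) := by
    rw [union_subset_iff]
    refine ⟨fun σ hσ => ?_, onesUpTo_mono ψ j.le_succ⟩
    simp only [ones, onesUpTo, mem_filter, mem_univ, true_and] at hσ ⊢
    exact ⟨hσ.2, (len_of_mem_J hB hσ.1).le⟩
  have := card_le_card hsub
  rw [card_union_of_disjoint hdisj] at this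
  have := card_mul_le_card_J hj hB
  omega

theorem IsAdmissible.pow_mul_sub_le_card_Jzero {qt : ℝ} {ψ : Tvert m g r → Bool} {i : ℕ}
    {Bs : ℕ → Finset (Tvert m g r)} (hadm : IsAdmissible qt ψ i Bs) (hqtr : 1 ≤ qt * r)
    {j : ℕ} (hj : j ≤ i) :
    (qt * r) ^ (j + 1) * m - (qt * r) ^ j * #(univ.filter fun σ => ψ σ = true) ≤
      (#(Jzero ψ (Bs j)) : ℝ) := by
  obtain ⟨hfam, -, hB0, hstep⟩ := hadm
  have hrec := le_of_pow_growth_recurrence (a := fun j => #(Bs j))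
    (z := fun j => #(Jzero ψ (Bs j))) (L := fun k => #(onesUpTo ψ k)) hqtr r.cast_nonneg (Nat.cast_nonneg _)
    (fun _ _ h => Nat.cast_le.mpr (card_le_card (onesUpTo_mono ψ h))) hB0 hstep
    (fun j hj => by
      rw [mul_comm]
      exact_mod_cast card_mul_add_card_onesUpTo_le ψ (by have := hfam.1; omega)
        (hfam.len_eq j hj)) j hj
  have hL : (#(onesUpTo ψ (j + 1)) : ℝ) ≤ #(univ.filter fun σ => ψ σ = true) :=
    Nat.cast_le.mpr (card_le_card fun σ hσ => by
      simp only [onesUpTo, mem_filter, mem_univ, true_and] at hσ ⊢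
      exact hσ.1)
  linear_combination hrec + mul_le_mul_of_nonneg_left hL (pow_nonneg (zero_le_one.trans hqtr) j)

end Tvert

theorem admissible_family_influence_bound_general
    (n r g m : ℕ)
    (y : Fin n → Fin r → Fin n)
    (qt : ℝ) (hqtr : 1 < qt * r)
    (A : Finset (Fin n)) (hA : A.card = m)
    (i : ℕ) (Bs : ℕ → Finset (Tvert m g r))
    (hadm : Tvert.IsAdmissible qt (psi (g := g) y A hA) i Bs)
    (j : ℕ) (hj : j ≤ i) :
    (qt * r) ^ (j + 1) * m -
        (qt * r) ^ j *
          ((Finset.univ.filter fun σ : Tvert m g r => psi y A hA σ = true).card : ℝ) ≤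
      ((Tvert.Jzero (psi y A hA) (Bs j)).card : ℝ) :=
  hadm.pow_mul_sub_le_card_Jzero hqtr.le hj

/-- **Iterated bound in Lemma 2.4.** Writing `ψ = ψ(A)` and `d = |{ψ = 1}|`, every
`ψ`-admissible family `(B_0, …, B_i)` satisfies
`|J(B_j) ∩ {ψ = 0}| ≥ (q̃r)^{j+1} m − (q̃r)^j d` for all `0 ≤ j ≤ i`. -/
theorem admissible_family_influence_bound
    (n r g m : ℕ) (hr : 1 ≤ r) (hg : 1 ≤ g) (hn : r < n)
    (y : Fin n → Fin r → Fin n) (hy : IsGraph y)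
    (qt : ℝ) (hqt0 : 0 < qt) (hqtr : 1 < qt * r)
    (A : Finset (Fin n)) (hA : A.card = m)
    (i : ℕ) (Bs : ℕ → Finset (Tvert m g r))
    (hadm : Tvert.IsAdmissible qt (psi (g := g) y A hA) i Bs)
    (j : ℕ) (hj : j ≤ i) :
    (qt * r) ^ (j + 1) * m -
        (qt * r) ^ j *
          ((Finset.univ.filter fun σ : Tvert m g r => psi y A hA σ = true).card : ℝ) ≤
      ((Tvert.Jzero (psi y A hA) (Bs j)).card : ℝ) :=
  admissible_family_influence_bound_general n r g m y qt hqtr A hA i Bs hadm j hj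
end

section
/- Fix an integer g ≥ 1, a realization of the graph (y_i(x)) and of the dual Bernoulli variables {B̂^x_t}, and let A ⊆ V_n with |A| = m. Say that a vertex z ∈ V_n gives birth at time t if ξ̂^A_t(z) = 1 and B̂^z_t = 1. Define B_0 = {σ ∈ T^0_m : z^σ gives birth at time 0} and, for 0 ≤ j ≤ g−2, B_{j+1} = {σ ∈ J(B_j) : [ψ(A)](σ) = 0 and z^σ gives birth at time j+1}. Then for every 1 ≤ j ≤ g, |ξ̂^A_j| ≥ |J(B_{j−1}) ∩ {ψ(A) = 0}|. -/
open MeasureTheory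
open scoped ENNReal
/-! Each `σ ∈ B_j` has a lineage on which `ψ` vanishes, and `z^σ` gives birth at time `j`, so
every child `σ'` of `σ` has `z^{σ'} = y_i(z^σ)` occupied at time `j + 1`. On vertices with
`ψ`-free lineage, `σ ↦ z^σ` is injective: `ψ(σ') = 0` with all strict prefixes at `0` forces
`z^{σ'} ∉ A^{σ'}`, i.e. `z^{σ'}` differs from the label of every `≺`-earlier vertex. Hence
`J(B_{j-1}) ∩ {ψ = 0}` injects into `ξ̂_j`. -/

namespace Tvert

variable {m g r : ℕ}

lemma ext_of_len {σ σ' : Tvert m g r} (h1 : σ.1 = σ'.1) (h2 : len σ = len σ')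
    (h3 : ∀ k (hk : k < len σ) (hk' : k < len σ'), σ.2.2 ⟨k, hk⟩ = σ'.2.2 ⟨k, hk'⟩) :
    σ = σ' := by
  obtain ⟨a, i, p⟩ := σ
  obtain ⟨a', i', p'⟩ := σ'
  obtain rfl : a = a' := h1
  obtain rfl : i = i' := Fin.ext h2
  obtain rfl : p = p' := funext fun k => h3 k k.2 k.2
  rfl

lemma trunc_trunc (σ : Tvert m g r) {l k : ℕ} (h : l ≤ k) :
    trunc (trunc σ k) l = trunc σ l :=
  ext_of_len rfl (by simp only [trunc, len]; omega) fun _ _ _ => rfl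

lemma trunc_of_len_le {σ : Tvert m g r} {l : ℕ} (h : len σ ≤ l) : trunc σ l = σ :=
  ext_of_len rfl (by simp only [trunc, len] at h ⊢; omega) fun _ _ _ => rfl

lemma trunc_of_edge {σ σ' : Tvert m g r} (h : edge σ σ') {l : ℕ} (hl : l ≤ len σ) :
    trunc σ' l = trunc σ l := by
  rw [← h.2, trunc_trunc σ' hl]

lemma eq_of_len_eq_of_key_eq {σ σ' : Tvert m g r} (hlen : len σ = len σ')
    (hkey : key σ = key σ') : σ = σ' := by
  obtain ⟨h1, h2⟩ := List.cons_eq_cons.1 hkey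
  refine ext_of_len (Fin.ext h1) hlen fun k hk _ => ?_
  have hfn := List.map_injective_iff.2 Fin.val_injective h2
  have hget := List.getElem_of_eq hfn (i := k) (by simpa [len] using hk)
  simpa using hget

lemma prec_or_prec_of_ne {σ σ' : Tvert m g r} (h : σ ≠ σ') : prec σ σ' ∨ prec σ' σ := by
  rcases lt_trichotomy (len σ) (len σ') with hl | hl | hl
  · exact Or.inl (Or.inl hl)
  · rcases trichotomous_of (List.Lex (· < ·)) (key σ) (key σ') with hk | hk | hk
    · exact Or.inl (Or.inr ⟨hl, hk⟩)
    · exact absurd (eq_of_len_eq_of_key_eq hl hk) h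
    · exact Or.inr (Or.inr ⟨hl.symm, hk⟩)
  · exact Or.inr (Or.inl hl)

end Tvert

section Lineage

variable {n r m g : ℕ} (y : Fin n → Fin r → Fin n) (A : Finset (Fin n)) (hA : A.card = m)

lemma zvert_of_len_eq_zero {σ : Tvert m g r} (h : Tvert.len σ = 0) :
    zvert y A hA σ = A.orderIsoOfFin hA σ.1 := by
  obtain ⟨a, ⟨i, hi⟩, p⟩ := σ
  obtain rfl : i = 0 := h
  rfl

lemma zvert_of_edge {σ σ' : Tvert m g r} (h : Tvert.edge σ σ') :
    ∃ i, zvert y A hA σ' = y (zvert y A hA σ) i := by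
  obtain ⟨a, ⟨k, hk⟩, p⟩ := σ'
  obtain ⟨hlen, htr⟩ := h
  rw [← htr]
  generalize Tvert.len σ = l at hlen
  simp only [Tvert.len] at hlen
  subst hlen
  refine ⟨p (Fin.last _), ?_⟩
  simp only [zvert, Tvert.trunc, Tvert.len, List.ofFn_succ', List.concat_eq_append,
    List.foldl_append, List.foldl_cons, List.foldl_nil]
  rw [List.ofFn_congr (min_eq_left (Nat.le_succ l))]
  rfl

-- Since `trunc σ l = σ` for `l ≥ len σ`, this includes `ψ σ = false`.
def PsiClear (σ : Tvert m g r) : Prop := ∀ l, psi y A hA (Tvert.trunc σ l) = false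

lemma psiClear_of_len_eq_zero {σ : Tvert m g r} (h : Tvert.len σ = 0) : PsiClear y A hA σ := by
  intro l
  rw [Tvert.trunc_of_len_le (by omega), psi]
  simp [h]

lemma PsiClear.of_edge {σ σ' : Tvert m g r} (hσ : PsiClear y A hA σ) (h : Tvert.edge σ σ')
    (hψ : psi y A hA σ' = false) : PsiClear y A hA σ' := by
  intro l
  rcases le_or_gt l (Tvert.len σ) with hl | hl
  · rw [Tvert.trunc_of_edge h hl]
    exact hσ l
  · rwa [Tvert.trunc_of_len_le (by rw [h.1]; omega)]

lemma PsiClear.zvert_notMem_Aseen {σ : Tvert m g r} (hσ : PsiClear y A hA σ)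
    (h : Tvert.len σ ≠ 0) : zvert y A hA σ ∉ Aseen y A hA σ := by
  have hprefix : ∀ l, psi y A hA (Tvert.trunc σ l) = false := hσ
  have hψ := hprefix (Tvert.len σ)
  rw [Tvert.trunc_of_len_le le_rfl, psi, dif_neg h] at hψ
  simpa [hprefix] using hψ

lemma PsiClear.zvert_ne_of_prec {σ σ' : Tvert m g r} (hσ' : PsiClear y A hA σ')
    (h : Tvert.prec σ σ') (hne : σ ≠ σ') : zvert y A hA σ ≠ zvert y A hA σ' := by
  by_cases h0 : Tvert.len σ' = 0
  · have h0' : Tvert.len σ = 0 := by rcases h with h | h <;> omega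
    rw [zvert_of_len_eq_zero y A hA h0, zvert_of_len_eq_zero y A hA h0', Ne,
      Subtype.coe_inj, (A.orderIsoOfFin hA).injective.eq_iff]
    exact fun h1 => hne (Tvert.ext_of_len h1 (by omega) fun _ _ _ => by omega)
  · intro heq
    refine hσ'.zvert_notMem_Aseen y A hA h0 ?_
    rw [← heq]
    exact Finset.mem_image_of_mem _ (by simpa using h)

lemma zvert_injOn_psiClear :
    Set.InjOn (zvert y A hA) {σ : Tvert m g r | PsiClear y A hA σ} := by
  intro σ hσ σ' hσ' heq
  by_contra hne
  rcases Tvert.prec_or_prec_of_ne hne with h | h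
  · exact hσ'.zvert_ne_of_prec y A hA h hne heq
  · exact hσ.zvert_ne_of_prec y A hA h (Ne.symm hne) heq.symm

end Lineage

section Growth

variable {n r m g : ℕ} (y : Fin n → Fin r → Fin n) (Bh : Fin n → ℕ → Bool) (ξ0 : Fin n → Bool)

def GivesBirth (t : ℕ) (z : Fin n) : Prop := xihat y Bh ξ0 t z = true ∧ Bh z t = true

lemma GivesBirth.xihat_succ {t : ℕ} {z : Fin n} (h : GivesBirth y Bh ξ0 t z) (i : Fin r) :
    xihat y Bh ξ0 (t + 1) (y z i) = true := by
  simp only [xihat, decide_eq_true_eq]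
  exact ⟨z, i, rfl, h⟩

variable (A : Finset (Fin n)) (hA : A.card = m)

lemma card_Jzero_le_numOnes {t : ℕ} {B : Finset (Tvert m g r)}
    (hB : ∀ σ ∈ B, PsiClear y A hA σ ∧ GivesBirth y Bh ξ0 t (zvert y A hA σ)) :
    (Tvert.Jzero (psi y A hA) B).card ≤ numOnes (xihat y Bh ξ0 (t + 1)) := by
  have parent : ∀ σ' ∈ Tvert.Jzero (psi y A hA) B,
      ∃ σ ∈ B, Tvert.edge σ σ' ∧ psi y A hA σ' = false := by
    intro σ' hσ'
    simp only [Tvert.Jzero, Tvert.J, Finset.mem_filter, Finset.mem_univ, true_and] at hσ'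
    obtain ⟨⟨σ, hσ, he⟩, hψ⟩ := hσ'
    exact ⟨σ, hσ, he, hψ⟩
  refine Finset.card_le_card_of_injOn (zvert y A hA) (fun σ' hσ' => ?_) ?_
  · obtain ⟨σ, hσ, he, -⟩ := parent σ' hσ'
    obtain ⟨i, hi⟩ := zvert_of_edge y A hA he
    simpa [hi] using ((hB σ hσ).2.xihat_succ y Bh ξ0 i)
  · refine (zvert_injOn_psiClear y A hA).mono fun σ' hσ' => ?_
    obtain ⟨σ, hσ, he, hψ⟩ := parent σ' hσ'
    exact (hB σ hσ).1.of_edge y A hA he hψ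

end Growth

theorem dual_growth_from_family_general
    (n r g m : ℕ)
    (y : Fin n → Fin r → Fin n)
    (Bh : Fin n → ℕ → Bool)
    (A : Finset (Fin n)) (hA : A.card = m)
    (Bs : ℕ → Finset (Tvert m g r))
    (hB0 : Bs 0 = Finset.univ.filter fun σ : Tvert m g r =>
      Tvert.len σ = 0 ∧
        xihat y Bh (fun v => decide (v ∈ A)) 0 (zvert y A hA σ) = true ∧
        Bh (zvert y A hA σ) 0 = true)
    (hBsucc : ∀ j : ℕ, j ≤ g - 2 →
      Bs (j + 1) = (Tvert.J (Bs j)).filter fun σ =>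
        psi y A hA σ = false ∧
          xihat y Bh (fun v => decide (v ∈ A)) (j + 1) (zvert y A hA σ) = true ∧
          Bh (zvert y A hA σ) (j + 1) = true) :
    ∀ j : ℕ, 1 ≤ j → j ≤ g →
      (Tvert.Jzero (psi y A hA) (Bs (j - 1))).card ≤
        numOnes (xihat y Bh (fun v => decide (v ∈ A)) j) := by
  have family : ∀ t ≤ g - 1, ∀ σ ∈ Bs t, PsiClear y A hA σ ∧
      GivesBirth y Bh (fun v => decide (v ∈ A)) t (zvert y A hA σ) := by
    intro t
    induction t with
    | zero =>
      intro _ σ hσ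
      simp only [hB0, Finset.mem_filter, Finset.mem_univ, true_and] at hσ
      exact ⟨psiClear_of_len_eq_zero y A hA hσ.1, hσ.2⟩
    | succ t ih =>
      intro ht σ' hσ'
      simp only [hBsucc t (by omega), Tvert.J, Finset.mem_filter, Finset.mem_univ,
        true_and] at hσ'
      obtain ⟨⟨σ, hσ, he⟩, hψ, hbirth⟩ := hσ'
      exact ⟨(ih (by omega) σ hσ).1.of_edge y A hA he hψ, hbirth⟩
  intro j hj1 hjg
  obtain ⟨t, rfl⟩ : ∃ t, j = t + 1 := ⟨j - 1, by omega⟩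
  exact card_Jzero_le_numOnes y Bh _ A hA (family t (by omega))

/-- **Equation (2) in Lemma 2.3.** For a fixed realization of the graph and of the dual driving
variables, with `B_0 = {σ ∈ T⁰_m : z^σ gives birth at time 0}` and
`B_{j+1} = {σ ∈ J(B_j) : ψ(A)(σ) = 0 and z^σ gives birth at time j+1}`, one has
`|ξ̂^A_j| ≥ |J(B_{j-1}) ∩ {ψ(A) = 0}|` for `1 ≤ j ≤ g`. -/
theorem dual_growth_from_family
    (n r g m : ℕ) (hr : 1 ≤ r) (hg : 1 ≤ g) (hn : r < n)
    (y : Fin n → Fin r → Fin n) (hy : IsGraph y)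
    (Bh : Fin n → ℕ → Bool)
    (A : Finset (Fin n)) (hA : A.card = m)
    (Bs : ℕ → Finset (Tvert m g r))
    (hB0 : Bs 0 = Finset.univ.filter fun σ : Tvert m g r =>
      Tvert.len σ = 0 ∧
        xihat y Bh (fun v => decide (v ∈ A)) 0 (zvert y A hA σ) = true ∧
        Bh (zvert y A hA σ) 0 = true)
    (hBsucc : ∀ j : ℕ, j ≤ g - 2 →
      Bs (j + 1) = (Tvert.J (Bs j)).filter fun σ =>
        psi y A hA σ = false ∧
          xihat y Bh (fun v => decide (v ∈ A)) (j + 1) (zvert y A hA σ) = true ∧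
          Bh (zvert y A hA σ) (j + 1) = true) :
    ∀ j : ℕ, 1 ≤ j → j ≤ g →
      (Tvert.Jzero (psi y A hA) (Bs (j - 1))).card ≤
        numOnes (xihat y Bh (fun v => decide (v ∈ A)) j) :=
  dual_growth_from_family_general n r g m y Bh A hA Bs hB0 hBsucc
end
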